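/- arXiv:0811.2449 — 4 statements merged into one kernel-verified Lean document; each statement's English description precedes it below -/
import Mathlib

section
/- There exist five points in a triangle of unit area such that every three of them form a triangle of area at least 1/6. -/
/-!
Areas of triangles scale by `|det|` under affine maps, so it suffices to exhibit the
configuration in the reference triangle `conv {0, e₀, e₁}` and then rescale the plane to make
that triangle's area `1`. In the reference triangle every area is `|det|` times the reference
area (whose value is never needed, only its positivity), and for the vertex `0`, the midpoints
of the two sides through it and the trisection points of the opposite side each of the ten
determinants is at least `1/6` in absolute value.
-/

open MeasureTheory

noncomputable def triArea (p q r : EuclideanSpace ℝ (Fin 2)) : ℝ :=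
  (volume (convexHull ℝ ({p, q, r} : Set (EuclideanSpace ℝ (Fin 2))))).toReal

local notation "ℝ²" => EuclideanSpace ℝ (Fin 2)
local notation "e₀" => EuclideanSpace.single (0 : Fin 2) (1 : ℝ)
local notation "e₁" => EuclideanSpace.single (1 : Fin 2) (1 : ℝ)

theorem triArea_affineMap (f : ℝ² →ᵃ[ℝ] ℝ²) (p q r : ℝ²) :
    triArea (f p) (f q) (f r) = |LinearMap.det f.linear| * triArea p q r := by
  have hf : ⇑f = (· + f 0) ∘ f.linear := by
    conv_lhs => rw [f.decomp]
    rfl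
  rw [triArea, triArea, ← Set.image_pair, ← Set.image_insert_eq, ← f.image_convexHull, hf,
    Set.image_comp, Set.image_add_right, measure_preimage_add_right,
    Measure.addHaar_image_linearMap, ENNReal.toReal_mul, ENNReal.toReal_ofReal (abs_nonneg _)]

theorem triArea_eq_abs_det_mul (p q r : ℝ²) :
    triArea p q r =
      |(q 0 - p 0) * (r 1 - p 1) - (r 0 - p 0) * (q 1 - p 1)| * triArea 0 e₀ e₁ := by
  let M : Matrix (Fin 2) (Fin 2) ℝ := !![q 0 - p 0, r 0 - p 0; q 1 - p 1, r 1 - p 1]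
  let f : ℝ² →ᵃ[ℝ] ℝ² := (Matrix.toEuclideanLin M).toAffineMap + AffineMap.const ℝ ℝ² p
  have h0 : f 0 = p := by simp [f]
  have h1 : f e₀ = q := by ext i; fin_cases i <;> simp [f, M, Matrix.mulVec, dotProduct]
  have h2 : f e₁ = r := by ext i; fin_cases i <;> simp [f, M, Matrix.mulVec, dotProduct]
  have hdet : LinearMap.det f.linear = M.det := by simp [f]
  have := triArea_affineMap f 0 e₀ e₁
  rwa [h0, h1, h2, hdet, Matrix.det_fin_two_of] at this

theorem affineSpan_zero_single_single : affineSpan ℝ ({0, e₀, e₁} : Set ℝ²) = ⊤ := by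
  rw [← SetLike.coe_set_eq, AffineSubspace.top_coe, affineSpan_insert_zero,
    ← Submodule.top_coe (R := ℝ), ← (EuclideanSpace.basisFun (Fin 2) ℝ).toBasis.span_eq]
  congr 2
  ext x
  simp [Set.range, Fin.exists_fin_two, eq_comm]

theorem triArea_zero_single_single_pos : 0 < triArea 0 e₀ e₁ := by
  refine ENNReal.toReal_pos ?_ (((Set.toFinite _).isCompact_convexHull ℝ).measure_lt_top).ne
  exact (Measure.measure_pos_of_nonempty_interior _
    (interior_convexHull_nonempty_iff_affineSpan_eq_top.2 affineSpan_zero_single_single)).ne'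

theorem smul_add_smul_mem_convexHull_zero {𝕜 E : Type*} [Field 𝕜] [LinearOrder 𝕜]
    [IsStrictOrderedRing 𝕜] [AddCommGroup E] [Module 𝕜 E] (u v : E) {a b : 𝕜}
    (ha : 0 ≤ a) (hb : 0 ≤ b) (hab : a + b ≤ 1) :
    a • u + b • v ∈ convexHull 𝕜 ({0, u, v} : Set E) := by
  have h := (convex_convexHull 𝕜 ({0, u, v} : Set E)).sum_mem (t := Finset.univ)
    (w := ![1 - a - b, a, b]) (z := ![0, u, v]) ?_ ?_ ?_
  · simpa [Fin.sum_univ_three] using h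
  · intro i _
    fin_cases i <;> simp <;> linarith
  · simp [Fin.sum_univ_three]
    ring
  · intro i _
    fin_cases i <;> exact subset_convexHull 𝕜 _ (by simp)

theorem exists_linearMap_abs_det_eq {E : Type*} [AddCommGroup E] [Module ℝ E]
    [FiniteDimensional ℝ E] [Nontrivial E] {c : ℝ} (hc : 0 ≤ c) :
    ∃ f : E →ₗ[ℝ] E, |LinearMap.det f| = c :=
  ⟨c ^ (Module.finrank ℝ E : ℝ)⁻¹ • LinearMap.id, by
    rw [LinearMap.det_smul, LinearMap.det_id, mul_one,
      Real.rpow_inv_natCast_pow hc Module.finrank_pos.ne', abs_of_nonneg hc]⟩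

/-- With `u = 0`, `v = e₀`, `w = e₁`: the vertex `u`, the midpoint of `uv`, the two points
trisecting `vw`, and the midpoint of `uw`. -/
noncomputable def fivePoints (i : Fin 5) : ℝ² :=
  (![0, 1 / 2, 2 / 3, 1 / 3, 0] i : ℝ) • e₀ + (![0, 0, 1 / 3, 2 / 3, 1 / 2] i : ℝ) • e₁

theorem fivePoints_mem_convexHull (i : Fin 5) :
    fivePoints i ∈ convexHull ℝ ({0, e₀, e₁} : Set ℝ²) := by
  unfold fivePoints
  apply smul_add_smul_mem_convexHull_zero <;> fin_cases i <;> norm_num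

theorem triArea_fivePoints {i j k : Fin 5} (hij : i ≠ j) (hik : i ≠ k) (hjk : j ≠ k) :
    triArea 0 e₀ e₁ / 6 ≤ triArea (fivePoints i) (fivePoints j) (fivePoints k) := by
  have hc : 0 ≤ triArea 0 e₀ e₁ := ENNReal.toReal_nonneg
  rw [triArea_eq_abs_det_mul (fivePoints i), div_eq_inv_mul]
  gcongr
  fin_cases i <;> fin_cases j <;> fin_cases k <;> simp_all [fivePoints] <;>
    norm_num [abs_of_nonneg, abs_of_nonpos]

theorem stmt_4 :
    ∃ (A B C : EuclideanSpace ℝ (Fin 2)) (p : Fin 5 → EuclideanSpace ℝ (Fin 2)),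
      triArea A B C = 1 ∧
      (∀ i, p i ∈ convexHull ℝ ({A, B, C} : Set (EuclideanSpace ℝ (Fin 2)))) ∧
      (∀ i j k : Fin 5, i ≠ j → i ≠ k → j ≠ k →
        1 / 6 ≤ triArea (p i) (p j) (p k)) := by
  have hc := triArea_zero_single_single_pos
  obtain ⟨f, hf⟩ := exists_linearMap_abs_det_eq (E := ℝ²) (inv_nonneg.2 hc.le)
  let g := f.toAffineMap
  have hg : |LinearMap.det g.linear| * triArea 0 e₀ e₁ = 1 := by
    rw [LinearMap.toAffineMap_linear, hf, inv_mul_cancel₀ hc.ne']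
  refine ⟨g 0, g e₀, g e₁, g ∘ fivePoints, ?_, fun i => ?_, fun i j k hij hik hjk => ?_⟩
  · rw [triArea_affineMap, hg]
  · rw [← Set.image_pair, ← Set.image_insert_eq, ← g.image_convexHull]
    exact Set.mem_image_of_mem g (fivePoints_mem_convexHull i)
  · calc 1 / 6 = |LinearMap.det g.linear| * (triArea 0 e₀ e₁ / 6) := by
          rw [mul_div_assoc', hg]
      _ ≤ |LinearMap.det g.linear| * triArea (fivePoints i) (fivePoints j) (fivePoints k) := by
        gcongr
        exact triArea_fivePoints hij hik hjk
      _ = _ := (triArea_affineMap g _ _ _).symm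
end

section
/- Given any six points in a triangle of unit area, some three of them form a triangle of area at most 1/4. -/
/-!
In the affine coordinates `(u, v)` of `A + u • (B - A) + v • (C - A)` the points lie in the
triangle `0 ≤ u, 0 ≤ v, u + v ≤ 1`, and every area is that of the coordinate triangle times
`area ABC = 1`. The midpoint triangle cuts this triangle into three corners and a middle piece.
A corner together with the middle piece is a parallelogram of relative area `1/2`, and a triangle
in a parallelogram has at most half its area; so we are done if some parallelogram contains three
of the points. Otherwise counting shows that the middle piece is empty and every corner holds two
points, and then two points of one corner span a small triangle with a point of another corner.
-/

open MeasureTheory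

open Set Pointwise
open scoped Finset

/-- Twice the signed area of the triangle `pqr`. -/
def cross (p q r : ℝ × ℝ) : ℝ := (q.1 - p.1) * (r.2 - p.2) - (q.2 - p.2) * (r.1 - p.1)

lemma cross_swap_left (p q r : ℝ × ℝ) : cross q p r = -cross p q r := by
  unfold cross; ring

lemma cross_swap_right (p q r : ℝ × ℝ) : cross p r q = -cross p q r := by
  unfold cross; ring

lemma cross_le_mul_of_mem_rect {a b : ℝ} {p q r : ℝ × ℝ} (hp : p ∈ Icc 0 a ×ˢ Icc 0 b)
    (hq : q ∈ Icc 0 a ×ˢ Icc 0 b) (hr : r ∈ Icc 0 a ×ˢ Icc 0 b) : cross p q r ≤ a * b := by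
  obtain ⟨⟨hx1, hx1'⟩, hy1, hy1'⟩ := hp
  obtain ⟨⟨hx2, hx2'⟩, hy2, hy2'⟩ := hq
  obtain ⟨⟨hx3, hx3'⟩, hy3, hy3'⟩ := hr
  unfold cross
  rcases le_total p.1 q.1 with ha | ha <;> rcases le_total p.2 q.2 with hc | hc
  · nlinarith [mul_nonneg (sub_nonneg.2 ha) (sub_nonneg.2 hy3'),
      mul_nonneg (sub_nonneg.2 hc) hx1,
      mul_nonneg (sub_nonneg.2 hc) (sub_nonneg.2 (le_trans ha hx2'))]
  · nlinarith [mul_nonneg (sub_nonneg.2 ha) (sub_nonneg.2 hy3'),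
      mul_nonneg (sub_nonneg.2 hc) (sub_nonneg.2 hx1'),
      mul_nonneg (sub_nonneg.2 (le_trans hc hy1')) (sub_nonneg.2 hx1')]
  · nlinarith [mul_nonneg (sub_nonneg.2 ha) hy1,
      mul_nonneg (sub_nonneg.2 ha) (sub_nonneg.2 hy1'),
      mul_nonneg (sub_nonneg.2 hc) hx1, mul_nonneg (sub_nonneg.2 hc) hx3]
  · nlinarith [mul_nonneg (sub_nonneg.2 ha) hy1,
      mul_nonneg (sub_nonneg.2 hc) (sub_nonneg.2 hx1'),
      mul_nonneg (sub_nonneg.2 ha) hy3, mul_nonneg (sub_nonneg.2 hc) hx3]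

lemma abs_cross_le_mul_of_mem_rect {a b : ℝ} {p q r : ℝ × ℝ} (hp : p ∈ Icc 0 a ×ˢ Icc 0 b)
    (hq : q ∈ Icc 0 a ×ˢ Icc 0 b) (hr : r ∈ Icc 0 a ×ˢ Icc 0 b) : |cross p q r| ≤ a * b := by
  have hneg := cross_le_mul_of_mem_rect hp hr hq
  rw [cross_swap_right] at hneg
  exact abs_le.2 ⟨by linarith, cross_le_mul_of_mem_rect hp hq hr⟩

def refTriangle : Set (ℝ × ℝ) := {x | 0 ≤ x.1 ∧ 0 ≤ x.2 ∧ x.1 + x.2 ≤ 1}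

def corner (i : Fin 3) : Set (ℝ × ℝ) :=
  refTriangle ∩ ![{x | x.1 + x.2 ≤ 1/2}, {x | 1/2 ≤ x.1}, {x | 1/2 ≤ x.2}] i

/-- Area-preserving maps taking `corner i` together with the middle piece onto `[0, 1/2]²`. -/
noncomputable def shear : Fin 3 → ℝ × ℝ → ℝ × ℝ :=
  ![id, fun x => (x.1 + x.2 - 1/2, x.2), fun x => (x.1, x.1 + x.2 - 1/2)]

def parallelogram (i : Fin 3) : Set (ℝ × ℝ) := shear i ⁻¹' Icc 0 (1/2) ×ˢ Icc 0 (1/2)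

lemma cross_shear (i : Fin 3) (p q r : ℝ × ℝ) :
    cross (shear i p) (shear i q) (shear i r) = cross p q r := by
  fin_cases i <;> simp [shear, cross] <;> ring

lemma abs_cross_le_quarter_of_mem_parallelogram {i : Fin 3} {p q r : ℝ × ℝ}
    (hp : p ∈ parallelogram i) (hq : q ∈ parallelogram i) (hr : r ∈ parallelogram i) :
    |cross p q r| ≤ 1/4 := by
  rw [← cross_shear i]
  linarith [abs_cross_le_mul_of_mem_rect hp hq hr]

lemma cross_sub_cross_le_half {a₁ a₂ b c : ℝ × ℝ} (ha₁ : a₁ ∈ corner 0) (ha₂ : a₂ ∈ corner 0)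
    (hb : b ∈ corner 1) (hc : c ∈ corner 2) : cross a₁ a₂ c - cross a₁ a₂ b ≤ 1/2 := by
  obtain ⟨⟨h1, h1', -⟩, (h1s : a₁.1 + a₁.2 ≤ 1/2)⟩ := ha₁
  obtain ⟨⟨h2, h2', -⟩, (h2s : a₂.1 + a₂.2 ≤ 1/2)⟩ := ha₂
  obtain ⟨⟨-, h3', h3s⟩, (h3 : 1/2 ≤ b.1)⟩ := hb
  obtain ⟨⟨h4, -, h4s⟩, (h4' : 1/2 ≤ c.2)⟩ := hc
  unfold cross
  rcases le_total a₂.1 a₁.1 with ha | ha <;> rcases le_total a₂.2 a₁.2 with hB | hB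
  · nlinarith [mul_nonneg (sub_nonneg.2 ha) (by linarith : (0:ℝ) ≤ c.2 - b.2),
      mul_nonneg (by linarith : (0:ℝ) ≤ 1/2 - (a₁.2 - a₂.2)) (by linarith : (0:ℝ) ≤ b.1 - c.1)]
  · nlinarith [mul_nonneg (sub_nonneg.2 ha) (by linarith : (0:ℝ) ≤ c.2 - b.2),
      mul_nonneg (sub_nonneg.2 hB) (by linarith : (0:ℝ) ≤ b.1 - c.1)]
  · nlinarith [mul_nonneg (sub_nonneg.2 hB) (by linarith : (0:ℝ) ≤ b.1 - c.1),
      mul_nonneg (sub_nonneg.2 ha) (by linarith : (0:ℝ) ≤ 1 - (c.2 - b.2))]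
  · nlinarith [mul_nonneg (sub_nonneg.2 ha) (by linarith : (0:ℝ) ≤ 1 - (c.2 - b.2)),
      mul_nonneg (sub_nonneg.2 hB) (by linarith : (0:ℝ) ≤ 1 + (c.1 - b.1))]

lemma cross_le_quarter_of_quarter_lt_cross {a₁ a₂ b c : ℝ × ℝ} (ha₁ : a₁ ∈ corner 0)
    (ha₂ : a₂ ∈ corner 0) (hb : b ∈ corner 1) (hc : c ∈ corner 2)
    (hab : 1/4 < cross a₁ a₂ b) : cross a₁ a₂ c ≤ 1/4 := by
  obtain ⟨⟨h1, h1', -⟩, (h1s : a₁.1 + a₁.2 ≤ 1/2)⟩ := ha₁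
  obtain ⟨⟨h2, h2', -⟩, (h2s : a₂.1 + a₂.2 ≤ 1/2)⟩ := ha₂
  obtain ⟨⟨-, h3', h3s⟩, (h3 : 1/2 ≤ b.1)⟩ := hb
  obtain ⟨⟨h4, -, h4s⟩, (h4' : 1/2 ≤ c.2)⟩ := hc
  unfold cross at *
  rcases le_or_gt a₂.1 a₁.1 with ha | ha
  · rcases le_or_gt a₁.2 a₂.2 with hβ | hβ
    · nlinarith [mul_nonneg (sub_nonneg.2 hβ) (by linarith : (0:ℝ) ≤ b.1 - a₁.1),
        mul_nonneg (sub_nonneg.2 ha) h3',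
        mul_nonneg (by linarith : (0:ℝ) ≤ 1/2 - (a₁.1 - a₂.1)) h1']
    · nlinarith [mul_nonneg (sub_nonneg.2 ha) (by linarith : (0:ℝ) ≤ c.2 - a₁.2),
        mul_nonneg (sub_nonneg.2 hβ.le) h1,
        mul_nonneg (sub_nonneg.2 hβ.le) (by linarith : (0:ℝ) ≤ 1/2 - c.1)]
  · rcases le_or_gt (a₁.2 - a₂.2) (a₂.1 - a₁.1) with hba | hba
    · nlinarith [mul_nonneg (sub_nonneg.2 ha.le) (by linarith : (0:ℝ) ≤ 1 - b.1 - b.2),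
        mul_nonneg (sub_nonneg.2 hba) (by linarith : (0:ℝ) ≤ b.1 - 1/2),
        mul_nonneg (by linarith : (0:ℝ) ≤ 1/2 - a₂.1 - a₂.2)
          (by linarith : (0:ℝ) ≤ 1/2 - a₁.2),
        mul_nonneg h2' (by linarith : (0:ℝ) ≤ 1 - a₁.1 - a₁.2)]
    · nlinarith [mul_nonneg (by linarith : (0:ℝ) ≤ a₁.2 - a₂.2)
          (by linarith : (0:ℝ) ≤ 1 - c.1 - c.2),
        mul_nonneg (sub_nonneg.2 hba.le) (by linarith : (0:ℝ) ≤ c.2 - 1/2),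
        mul_nonneg (by linarith : (0:ℝ) ≤ 1/2 - a₂.1 - a₂.2)
          (by linarith : (0:ℝ) ≤ 1/2 - a₁.2),
        mul_nonneg h2' (by linarith : (0:ℝ) ≤ 1 - a₁.1 - a₁.2)]

lemma abs_cross_le_quarter_of_quarter_lt_cross {a₁ a₂ b c : ℝ × ℝ} (ha₁ : a₁ ∈ corner 0)
    (ha₂ : a₂ ∈ corner 0) (hb : b ∈ corner 1) (hc : c ∈ corner 2)
    (hab : 1/4 < cross a₁ a₂ b) : |cross a₁ a₂ c| ≤ 1/4 := by
  have hsub := cross_sub_cross_le_half ha₂ ha₁ hb hc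
  rw [cross_swap_left a₁ a₂ c, cross_swap_left a₁ a₂ b] at hsub
  exact abs_le.2 ⟨by linarith, cross_le_quarter_of_quarter_lt_cross ha₁ ha₂ hb hc hab⟩

lemma abs_cross_le_quarter_or {a₁ a₂ b c : ℝ × ℝ} (ha₁ : a₁ ∈ corner 0) (ha₂ : a₂ ∈ corner 0)
    (hb : b ∈ corner 1) (hc : c ∈ corner 2) :
    |cross a₁ a₂ b| ≤ 1/4 ∨ |cross a₁ a₂ c| ≤ 1/4 := by
  by_contra! h
  rcases lt_abs.1 h.1 with hpos | hneg
  · exact (abs_cross_le_quarter_of_quarter_lt_cross ha₁ ha₂ hb hc hpos).not_gt h.2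
  · rw [← cross_swap_left] at hneg
    have := abs_cross_le_quarter_of_quarter_lt_cross ha₂ ha₁ hb hc hneg
    rw [cross_swap_left, abs_neg] at this
    exact this.not_gt h.2

/-- The labels `0, 1, 2` stand for the corners and `3` for the middle piece. -/
noncomputable def piece (x : ℝ × ℝ) : Fin 4 :=
  if x.1 + x.2 ≤ 1/2 then 0 else if 1/2 ≤ x.1 then 1 else if 1/2 ≤ x.2 then 2 else 3

lemma mem_corner_of_piece_eq {x : ℝ × ℝ} (hx : x ∈ refTriangle) {i : Fin 3}
    (h : piece x = i.castSucc) : x ∈ corner i := by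
  refine ⟨hx, ?_⟩
  unfold piece at h
  fin_cases i <;> split_ifs at h <;> simp_all

lemma mem_parallelogram_of_piece_eq {x : ℝ × ℝ} (hx : x ∈ refTriangle) {i : Fin 3}
    (h : piece x = i.castSucc ∨ piece x = 3) : x ∈ parallelogram i := by
  obtain ⟨h1, h2, hs⟩ := hx
  unfold piece at h
  fin_cases i <;> split_ifs at h <;> simp_all [parallelogram, shear, Prod.le_def] <;>
    constructorm* _ ∧ _ <;> linarith

lemma card_filter_eq_or_eq {α β : Type*} [Fintype α] [DecidableEq α] [DecidableEq β]
    (g : α → β) {r s : β} (hrs : r ≠ s) :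
    #{x | g x = r ∨ g x = s} = #{x | g x = r} + #{x | g x = s} := by
  rw [Finset.filter_or, Finset.card_union_of_disjoint
    (Finset.disjoint_filter.2 fun _ _ hr hs => hrs (hr.symm.trans hs))]

lemma exists_triple_or_two_one_one {α : Type*} [Fintype α] (hα : Fintype.card α = 6)
    (g : α → Fin 4) :
    (∃ i : Fin 3, ∃ a b c, a ≠ b ∧ a ≠ c ∧ b ≠ c ∧
      ∀ x ∈ ({a, b, c} : Set α), g x = i.castSucc ∨ g x = 3) ∨
    ∃ a₁ a₂ b c, a₁ ≠ a₂ ∧ g a₁ = 0 ∧ g a₂ = 0 ∧ g b = 1 ∧ g c = 2 := by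
  classical
  by_cases hbig : ∃ i : Fin 3, 2 < #{x | g x = i.castSucc ∨ g x = 3}
  · obtain ⟨i, hi⟩ := hbig
    obtain ⟨a, ha, b, hb, c, hc, hab, hac, hbc⟩ := Finset.two_lt_card.1 hi
    refine .inl ⟨i, a, b, c, hab, hac, hbc, ?_⟩
    rintro x (rfl | rfl | rfl) <;> simp_all
  · push Not at hbig
    have hsum : #{x | g x = 0} + #{x | g x = 1} + #{x | g x = 2} + #{x | g x = 3} = 6 := by
      have := Finset.card_eq_sum_card_fiberwise (s := Finset.univ) (t := Finset.univ)
        fun x _ => Finset.mem_univ (g x)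
      rwa [Fin.sum_univ_four, Finset.card_univ, hα, eq_comm] at this
    have h0 : #{x | g x = 0 ∨ g x = 3} ≤ 2 := hbig 0
    have h1 : #{x | g x = 1 ∨ g x = 3} ≤ 2 := hbig 1
    have h2 : #{x | g x = 2 ∨ g x = 3} ≤ 2 := hbig 2
    rw [card_filter_eq_or_eq g (by decide)] at h0 h1 h2
    obtain ⟨a₁, ha₁, a₂, ha₂, hne⟩ := Finset.one_lt_card.1 (by omega : 1 < #{x | g x = 0})
    obtain ⟨b, hb⟩ := Finset.card_pos.1 (by omega : 0 < #{x | g x = 1})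
    obtain ⟨c, hc⟩ := Finset.card_pos.1 (by omega : 0 < #{x | g x = 2})
    simp only [Finset.mem_filter, Finset.mem_univ, true_and] at ha₁ ha₂ hb hc
    exact .inr ⟨a₁, a₂, b, c, hne, ha₁, ha₂, hb, hc⟩

theorem exists_abs_cross_le_quarter (w : Fin 6 → ℝ × ℝ) (hw : ∀ k, w k ∈ refTriangle) :
    ∃ i j k, i ≠ j ∧ i ≠ k ∧ j ≠ k ∧ |cross (w i) (w j) (w k)| ≤ 1/4 := by
  rcases exists_triple_or_two_one_one (Fintype.card_fin 6) (piece ∘ w) with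
    ⟨i, a, b, c, hab, hac, hbc, habc⟩ | ⟨a₁, a₂, b, c, hne, ha₁, ha₂, hb, hc⟩
  · have hmem : ∀ x ∈ ({a, b, c} : Set (Fin 6)), w x ∈ parallelogram i :=
      fun x hx => mem_parallelogram_of_piece_eq (hw x) (habc x hx)
    exact ⟨a, b, c, hab, hac, hbc, abs_cross_le_quarter_of_mem_parallelogram
      (hmem a (by simp)) (hmem b (by simp)) (hmem c (by simp))⟩
  · have hne_of_piece {x y : Fin 6} (h : piece (w x) ≠ piece (w y)) : x ≠ y :=
      ne_of_apply_ne (piece ∘ w) h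
    rcases abs_cross_le_quarter_or (mem_corner_of_piece_eq (i := 0) (hw a₁) ha₁)
      (mem_corner_of_piece_eq (i := 0) (hw a₂) ha₂) (mem_corner_of_piece_eq (i := 1) (hw b) hb)
      (mem_corner_of_piece_eq (i := 2) (hw c) hc) with h | h
    · exact ⟨a₁, a₂, b, hne, hne_of_piece (by simp_all), hne_of_piece (by simp_all), h⟩
    · exact ⟨a₁, a₂, c, hne, hne_of_piece (by simp_all), hne_of_piece (by simp_all), h⟩

def triangleMap {E : Type*} [AddCommGroup E] [Module ℝ E] (a b c : E) (w : ℝ × ℝ) : E :=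
  a + w.1 • (b - a) + w.2 • (c - a)

lemma exists_mem_refTriangle_of_mem_convexHull {E : Type*} [AddCommGroup E] [Module ℝ E]
    {a b c x : E} (hx : x ∈ convexHull ℝ {a, b, c}) :
    ∃ w ∈ refTriangle, x = triangleMap a b c w := by
  rw [convexHull_insert (insert_nonempty b {c}), convexHull_pair, mem_convexJoin] at hx
  obtain ⟨a', rfl, y, ⟨s, t, hs, ht, hst, rfl⟩, ⟨l, m, hl, hm, hlm, rfl⟩⟩ := hx
  refine ⟨(m * s, m * t), ⟨by positivity, by positivity, by nlinarith⟩, ?_⟩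
  obtain rfl : l = 1 - m := by linarith
  obtain rfl : t = 1 - s := by linarith
  simp only [triangleMap, sub_smul, one_smul, smul_sub, smul_add, mul_smul]
  abel

lemma triArea_eq_abs_cross_mul (p q r : EuclideanSpace ℝ (Fin 2)) :
    triArea p q r = |cross (p 0, p 1) (q 0, q 1) (r 0, r 1)| *
      triArea 0 (EuclideanSpace.single 0 1) (EuclideanSpace.single 1 1) := by
  set e := (EuclideanSpace.basisFun (Fin 2) ℝ).toBasis
  set L := e.constr ℝ ![q - p, r - p]
  have hL : L '' {0, EuclideanSpace.single 0 1, EuclideanSpace.single 1 1} =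
      {0, q - p, r - p} := by
    simp [L, e, Set.image_insert_eq]
  have hpqr : ({p, q, r} : Set (EuclideanSpace ℝ (Fin 2))) =
      p +ᵥ L '' {0, EuclideanSpace.single 0 1, EuclideanSpace.single 1 1} := by
    rw [hL, ← Set.image_vadd]
    simp [Set.image_insert_eq]
  have hdet : LinearMap.det L = cross (p 0, p 1) (q 0, q 1) (r 0, r 1) := by
    rw [← LinearMap.det_toMatrix e, Matrix.det_fin_two]
    simp [L, e, LinearMap.toMatrix_apply, cross]
    ring
  rw [triArea, hpqr, convexHull_vadd, measure_vadd, ← LinearMap.image_convexHull,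
    Measure.addHaar_image_linearMap, hdet, ENNReal.toReal_mul,
    ENNReal.toReal_ofReal (abs_nonneg _), triArea]

lemma triArea_triangleMap (a b c : EuclideanSpace ℝ (Fin 2)) (w₁ w₂ w₃ : ℝ × ℝ) :
    triArea (triangleMap a b c w₁) (triangleMap a b c w₂) (triangleMap a b c w₃) =
      |cross w₁ w₂ w₃| * triArea a b c := by
  have hcross : cross ((triangleMap a b c w₁) 0, (triangleMap a b c w₁) 1)
      ((triangleMap a b c w₂) 0, (triangleMap a b c w₂) 1)
      ((triangleMap a b c w₃) 0, (triangleMap a b c w₃) 1) =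
      cross w₁ w₂ w₃ * cross (a 0, a 1) (b 0, b 1) (c 0, c 1) := by
    simp only [triangleMap, PiLp.add_apply, PiLp.smul_apply, PiLp.sub_apply, smul_eq_mul, cross]
    ring
  rw [triArea_eq_abs_cross_mul, triArea_eq_abs_cross_mul a, hcross, abs_mul, mul_assoc]

theorem stmt_6 (A B C : EuclideanSpace ℝ (Fin 2)) (hABC : triArea A B C = 1)
    (p : Fin 6 → EuclideanSpace ℝ (Fin 2))
    (hp : ∀ i, p i ∈ convexHull ℝ ({A, B, C} : Set (EuclideanSpace ℝ (Fin 2)))) :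
    ∃ i j k : Fin 6, i ≠ j ∧ i ≠ k ∧ j ≠ k ∧ triArea (p i) (p j) (p k) ≤ 1 / 4 := by
  choose w hw hpw using fun k => exists_mem_refTriangle_of_mem_convexHull (hp k)
  obtain ⟨i, j, k, hij, hik, hjk, hsmall⟩ := exists_abs_cross_le_quarter w hw
  refine ⟨i, j, k, hij, hik, hjk, ?_⟩
  rwa [hpw i, hpw j, hpw k, triArea_triangleMap, hABC, mul_one]
end

section
/- If two points p, q lie on the same side of an equilateral triangle T of side L with d(p,q) ≤ 2L/5, then the set of points x ∈ T with area(p,q,x) > (6/25)·area(T) has area at most (4/25)·area(T). -/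
open MeasureTheory

/-!
Write `p = X + s • (Y - X)`, `q = X + t • (Y - X)` on the side `XY` and a point of the triangle
as `x = X + a • (Y - X) + b • (Z - X)`. Then `area(p, q, x) = |t - s| * b * area(T)` with
`|t - s| ≤ 2/5`, so `area(p, q, x) > (6/25) area(T)` forces `b > 3/5`: the point lies in the
image of `T` under the homothety of ratio `2/5` centred at the opposite vertex `Z`, which has
area `(4/25) area(T)`.
-/

open Set Pointwise

theorem mem_convexHull_triple_iff {E : Type*} [AddCommGroup E] [Module ℝ E] {X Y Z x : E} :
    x ∈ convexHull ℝ {X, Y, Z} ↔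
      ∃ a b : ℝ, 0 ≤ a ∧ 0 ≤ b ∧ a + b ≤ 1 ∧ x = X + a • (Y - X) + b • (Z - X) := by
  constructor
  · intro hx
    rw [convexHull_insert (insert_nonempty Y {Z}), convexHull_pair, mem_convexJoin] at hx
    obtain ⟨_, rfl, w, hw, hxw⟩ := hx
    rw [segment_eq_image'] at hxw hw
    obtain ⟨d, ⟨hd0, hd1⟩, rfl⟩ := hw
    obtain ⟨c, ⟨hc0, hc1⟩, rfl⟩ := hxw
    refine ⟨c * (1 - d), c * d, by nlinarith, by positivity, by nlinarith, by module⟩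
  · rintro ⟨a, b, ha, hb, hab, rfl⟩
    have hmem : ∀ i, ![X, Y, Z] i ∈ convexHull ℝ {X, Y, Z} := fun i =>
      subset_convexHull ℝ _ (by fin_cases i <;> simp)
    have hw : ∀ i ∈ Finset.univ, 0 ≤ ![1 - a - b, a, b] i := fun i _ => by
      fin_cases i <;>
        simp only [Fin.zero_eta, Fin.mk_one, Fin.reduceFinMk, Fin.isValue, Matrix.cons_val] <;>
        linarith
    have hw1 : ∑ i, ![1 - a - b, a, b] i = 1 := by
      simp only [Fin.sum_univ_three, Fin.isValue, Matrix.cons_val]; ring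
    convert (convex_convexHull ℝ {X, Y, Z}).sum_mem hw hw1 fun i _ => hmem i using 1
    simp only [Fin.sum_univ_three, Fin.isValue, Matrix.cons_val]
    module

local notation "E²" => EuclideanSpace ℝ (Fin 2)

def det2 (u v : E²) : ℝ := u 0 * v 1 - u 1 * v 0

theorem det2_smul_smul_add_smul (c a b : ℝ) (u v : E²) :
    det2 (c • u) (a • u + b • v) = c * b * det2 u v := by
  simp only [det2, PiLp.smul_apply, PiLp.add_apply, smul_eq_mul]
  ring

-- Only a normalising constant: its volume cancels from every ratio of areas below.
noncomputable def unitTriangle : Set E² :=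
  convexHull ℝ {0, EuclideanSpace.single 0 1, EuclideanSpace.single 1 1}

theorem det_basisFun_constr (u v : E²) :
    LinearMap.det ((EuclideanSpace.basisFun (Fin 2) ℝ).toBasis.constr ℝ ![u, v]) = det2 u v := by
  rw [← LinearMap.det_toMatrix (EuclideanSpace.basisFun (Fin 2) ℝ).toBasis, Matrix.det_fin_two]
  simp [LinearMap.toMatrix_apply, det2, mul_comm]

theorem volume_convexHull_triple (p q r : E²) :
    volume (convexHull ℝ {p, q, r}) =
      ENNReal.ofReal |det2 (q - p) (r - p)| * volume unitTriangle := by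
  set f := (EuclideanSpace.basisFun (Fin 2) ℝ).toBasis.constr ℝ ![q - p, r - p]
  have hf : ∀ i, f (EuclideanSpace.single i 1) = ![q - p, r - p] i := fun i => by simp [f]
  have himg : convexHull ℝ {p, q, r} = p +ᵥ f '' unitTriangle := by
    rw [unitTriangle, f.image_convexHull, ← convexHull_vadd]
    simp [image_insert_eq, hf, vadd_set_insert, vadd_eq_add]
  rw [himg, measure_vadd, Measure.addHaar_image_linearMap, det_basisFun_constr]

theorem triArea_eq (p q r : E²) :
    triArea p q r = |det2 (q - p) (r - p)| * (volume unitTriangle).toReal := by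
  rw [triArea, volume_convexHull_triple, ENNReal.toReal_mul, ENNReal.toReal_ofReal (abs_nonneg _)]

theorem triArea_nonneg (p q r : E²) : 0 ≤ triArea p q r := ENNReal.toReal_nonneg

theorem triArea_of_affine_coords (X Y Z : E²) (s t a b : ℝ) :
    triArea (X + s • (Y - X)) (X + t • (Y - X)) (X + a • (Y - X) + b • (Z - X)) =
      |t - s| * |b| * triArea X Y Z := by
  rw [triArea_eq, triArea_eq,
    show X + t • (Y - X) - (X + s • (Y - X)) = (t - s) • (Y - X) by module,
    show X + a • (Y - X) + b • (Z - X) - (X + s • (Y - X)) = (a - s) • (Y - X) + b • (Z - X) by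
      module,
    det2_smul_smul_add_smul, abs_mul, abs_mul]
  ring

theorem setOf_lt_triArea_subset_homothety {X Y Z p q : E²} (hp : p ∈ segment ℝ X Y)
    (hq : q ∈ segment ℝ X Y) {r c : ℝ} (hc : 0 ≤ c) (hcr : c < r)
    (hpq : dist p q ≤ r * dist X Y) :
    {x ∈ convexHull ℝ {X, Y, Z} | c * triArea X Y Z < triArea p q x} ⊆
      AffineMap.homothety Z (1 - c / r) '' convexHull ℝ {X, Y, Z} := by
  rintro x ⟨hxT, hx⟩
  rw [segment_eq_image'] at hp hq
  obtain ⟨s, -, rfl⟩ := hp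
  obtain ⟨t, -, rfl⟩ := hq
  obtain ⟨a, b, ha, hb, hab, rfl⟩ := mem_convexHull_triple_iff.mp hxT
  rw [triArea_of_affine_coords, abs_of_nonneg hb] at hx
  have hA : 0 < triArea X Y Z := (triArea_nonneg X Y Z).lt_of_ne fun h => by
    simp [← h] at hx
  have hXY : 0 < dist X Y := by
    refine dist_pos.mpr fun h => hA.ne' ?_
    simp [h, triArea_eq, det2]
  have hts : |t - s| ≤ r := by
    rw [dist_eq_norm, show X + s • (Y - X) - (X + t • (Y - X)) = (s - t) • (Y - X) by module,
      norm_smul, Real.norm_eq_abs, abs_sub_comm, ← dist_eq_norm, dist_comm] at hpq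
    exact le_of_mul_le_mul_right hpq hXY
  have hb' : 1 - (1 - c / r) < b := by
    rw [sub_sub_cancel, div_lt_iff₀ (hc.trans_lt hcr), mul_comm]
    calc c < |t - s| * b := lt_of_mul_lt_mul_right hx hA.le
      _ ≤ r * b := by gcongr
  have hρ : 0 < 1 - c / r := by
    rw [sub_pos, div_lt_one (hc.trans_lt hcr)]; exact hcr
  generalize 1 - c / r = ρ at hρ hb' ⊢
  refine ⟨X + (a / ρ) • (Y - X) + (1 + (b - 1) / ρ) • (Z - X), ?_, ?_⟩
  · refine mem_convexHull_triple_iff.mpr ⟨_, _, by positivity, ?_, ?_, rfl⟩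
    · have : -1 ≤ (b - 1) / ρ := by rw [le_div_iff₀ hρ]; linarith
      linarith
    · have : a / ρ + (b - 1) / ρ ≤ 0 := by
        rw [← add_div]; exact div_nonpos_of_nonpos_of_nonneg (by linarith) hρ.le
      linarith
  · rw [AffineMap.homothety_apply, vsub_eq_sub, vadd_eq_add]
    match_scalars <;> field_simp <;> ring

theorem volume_setOf_lt_triArea_le {X Y Z p q : E²} (hp : p ∈ segment ℝ X Y)
    (hq : q ∈ segment ℝ X Y) {r c : ℝ} (hc : 0 ≤ c) (hcr : c < r)
    (hpq : dist p q ≤ r * dist X Y) :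
    (volume {x ∈ convexHull ℝ {X, Y, Z} | c * triArea X Y Z < triArea p q x}).toReal ≤
      (1 - c / r) ^ 2 * triArea X Y Z := by
  have hT : volume (convexHull ℝ {X, Y, Z}) ≠ ⊤ :=
    (toFinite _).isCompact_convexHull (𝕜 := ℝ) |>.measure_lt_top.ne
  calc _ ≤ (volume (AffineMap.homothety Z (1 - c / r) '' convexHull ℝ {X, Y, Z})).toReal := by
        refine ENNReal.toReal_mono ?_
          (measure_mono (setOf_lt_triArea_subset_homothety hp hq hc hcr hpq))
        rw [Measure.addHaar_image_homothety]
        exact ENNReal.mul_ne_top ENNReal.ofReal_ne_top hT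
    _ = (1 - c / r) ^ 2 * triArea X Y Z := by
        rw [Measure.addHaar_image_homothety, finrank_euclideanSpace_fin, ENNReal.toReal_mul,
          ENNReal.toReal_ofReal (abs_nonneg _), abs_of_nonneg (sq_nonneg _), triArea]

theorem exists_triple_eq_of_mem_of_ne {α : Type*} {A B C X Y : α} (hX : X ∈ ({A, B, C} : Set α))
    (hY : Y ∈ ({A, B, C} : Set α)) (hXY : X ≠ Y) : ∃ Z, ({A, B, C} : Set α) = {X, Y, Z} := by
  simp only [mem_insert_iff, mem_singleton_iff] at hX hY
  rcases hX with rfl | rfl | rfl <;> rcases hY with rfl | rfl | rfl <;>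
    first
    | exact absurd rfl hXY
    | exact ⟨A, by aesop⟩
    | exact ⟨B, by aesop⟩
    | exact ⟨C, by aesop⟩

theorem dist_eq_of_mem_triple_of_ne {α : Type*} [PseudoMetricSpace α] {A B C X Y : α} {L : ℝ}
    (hAB : dist A B = L) (hBC : dist B C = L) (hAC : dist A C = L)
    (hX : X ∈ ({A, B, C} : Set α)) (hY : Y ∈ ({A, B, C} : Set α)) (hXY : X ≠ Y) :
    dist X Y = L := by
  simp only [mem_insert_iff, mem_singleton_iff] at hX hY
  rcases hX with rfl | rfl | rfl <;> rcases hY with rfl | rfl | rfl <;>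
    simp_all [dist_comm]

theorem stmt_12_general (L : ℝ) (A B C : EuclideanSpace ℝ (Fin 2))
    (hAB : dist A B = L) (hBC : dist B C = L) (hAC : dist A C = L)
    (p q : EuclideanSpace ℝ (Fin 2))
    (hside : ∃ X Y : EuclideanSpace ℝ (Fin 2),
      X ∈ ({A, B, C} : Set (EuclideanSpace ℝ (Fin 2))) ∧
      Y ∈ ({A, B, C} : Set (EuclideanSpace ℝ (Fin 2))) ∧ X ≠ Y ∧
      p ∈ segment ℝ X Y ∧ q ∈ segment ℝ X Y)
    (hd : dist p q ≤ 2 * L / 5) :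
    (volume {x ∈ convexHull ℝ ({A, B, C} : Set (EuclideanSpace ℝ (Fin 2))) |
        6 / 25 * triArea A B C < triArea p q x}).toReal ≤ 4 / 25 * triArea A B C := by
  obtain ⟨X, Y, hX, hY, hXY, hp, hq⟩ := hside
  obtain ⟨Z, hXYZ⟩ := exists_triple_eq_of_mem_of_ne hX hY hXY
  have hdXY : dist X Y = L := dist_eq_of_mem_triple_of_ne hAB hBC hAC hX hY hXY
  have harea : triArea A B C = triArea X Y Z := by rw [triArea, triArea, hXYZ]
  rw [hXYZ, harea]
  calc _ ≤ (1 - 6 / 25 / (2 / 5)) ^ 2 * triArea X Y Z :=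
        volume_setOf_lt_triArea_le hp hq (by norm_num) (by norm_num) (by linarith)
    _ = 4 / 25 * triArea X Y Z := by norm_num

theorem stmt_12 (L : ℝ) (hL : 0 < L) (A B C : EuclideanSpace ℝ (Fin 2))
    (hAB : dist A B = L) (hBC : dist B C = L) (hAC : dist A C = L)
    (p q : EuclideanSpace ℝ (Fin 2))
    (hside : ∃ X Y : EuclideanSpace ℝ (Fin 2),
      X ∈ ({A, B, C} : Set (EuclideanSpace ℝ (Fin 2))) ∧
      Y ∈ ({A, B, C} : Set (EuclideanSpace ℝ (Fin 2))) ∧ X ≠ Y ∧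
      p ∈ segment ℝ X Y ∧ q ∈ segment ℝ X Y)
    (hd : dist p q ≤ 2 * L / 5) :
    (volume {x ∈ convexHull ℝ ({A, B, C} : Set (EuclideanSpace ℝ (Fin 2))) |
        6 / 25 * triArea A B C < triArea p q x}).toReal ≤ 4 / 25 * triArea A B C :=
  stmt_12_general L A B C hAB hBC hAC p q hside hd
end

section
/- For every ε > 0, for all sufficiently large n there exists a configuration of n points in a triangle of unit area such that the number of triples forming triangles of area at most 1/4 is at most (5/8 + ε)·C(n,3). -/
open MeasureTheory

/-!
Put the vertices `A = (0,0)`, `B = (2,0)`, `C = (0,1)` of a triangle of area `1` and its centroid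
`G`, and split the `n` points into four blocks of at least `⌊n/4⌋` consecutive points placed at
`A`, `B`, `C` and `G`. Any three of `A, B, C, G` span a triangle of area `1` or `1/3`, so every
triple meeting three different blocks has area `> 1/4`, and there are at least
`4 ⌊n/4⌋³ ≈ (3/8) C(n,3)` of them. Areas are computed by the shoelace formula, which follows from
the area `1/2` of the standard triangle by the change of variables for linear maps.
-/

local notation "E" => EuclideanSpace ℝ (Fin 2)

section Area

open Set

theorem volume_stdTriangle_prod :
    volume {x : ℝ × ℝ | x.1 ∈ Icc 0 1 ∧ x.2 ∈ Icc 0 (1 - x.1)} = ENNReal.ofReal (1 / 2) := by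
  have hmeas : MeasurableSet {x : ℝ × ℝ | x.1 ∈ Icc 0 1 ∧ x.2 ∈ Icc 0 (1 - x.1)} :=
    (measurableSet_Icc.preimage measurable_fst).inter
      ((measurableSet_le measurable_const measurable_snd).inter
        (measurableSet_le measurable_snd (measurable_const.sub measurable_fst)))
  have hslice (x : ℝ) : volume (Prod.mk x ⁻¹' {x : ℝ × ℝ | x.1 ∈ Icc 0 1 ∧ x.2 ∈ Icc 0 (1 - x.1)})
      = (Icc 0 1).indicator (fun x => ENNReal.ofReal (1 - x)) x := by
    by_cases hx : x ∈ Icc (0 : ℝ) 1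
    · simp only [preimage, mem_ofPred_eq, hx, true_and, ofPred_mem_eq, indicator_of_mem]
      simp [Real.volume_Icc]
    · simp only [preimage, mem_ofPred_eq, hx, false_and, ofPred_false, indicator_of_notMem hx,
        measure_empty]
  rw [Measure.volume_eq_prod, Measure.prod_apply hmeas]
  simp_rw [hslice]
  rw [lintegral_indicator measurableSet_Icc, ← ofReal_integral_eq_lintegral_ofReal]
  · rw [integral_Icc_eq_integral_Ioc, ← intervalIntegral.integral_of_le zero_le_one]
    rw [intervalIntegral.integral_comp_sub_left (fun x => x)]
    norm_num [integral_id]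
  · exact (continuous_const.sub continuous_id).integrableOn_Icc
  · filter_upwards [ae_restrict_mem measurableSet_Icc] with x hx
    simpa using hx.2

theorem convexHull_stdTriangle :
    convexHull ℝ {(0 : E), !₂[1, 0], !₂[0, 1]} = {x : E | 0 ≤ x 0 ∧ 0 ≤ x 1 ∧ x 0 + x 1 ≤ 1} := by
  apply (convexHull_min ?_ ?_).antisymm
  · rintro x ⟨hx0, hx1, hx⟩
    convert (convex_convexHull ℝ _).sum_mem (t := Finset.univ) (w := ![1 - x 0 - x 1, x 0, x 1])
      (z := ![(0 : E), !₂[1, 0], !₂[0, 1]]) ?_ ?_ ?_ using 1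
    · ext i; fin_cases i <;> simp [Fin.sum_univ_three]
    · intro i _; fin_cases i <;> simp <;> linarith
    · simp [Fin.sum_univ_three]; ring
    · intro i _; fin_cases i <;> exact subset_convexHull ℝ _ (by simp)
  · rintro x (rfl | rfl | rfl) <;> norm_num
  · rintro x ⟨hx0, hx1, hx⟩ y ⟨hy0, hy1, hy⟩ a b ha hb hab
    simp only [PiLp.add_apply, PiLp.smul_apply, smul_eq_mul, mem_ofPred_eq]
    refine ⟨by positivity, by positivity, by nlinarith⟩

theorem volume_convexHull_stdTriangle :
    volume (convexHull ℝ {(0 : E), !₂[1, 0], !₂[0, 1]}) = ENNReal.ofReal (1 / 2) := by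
  have hpres : MeasurePreserving ((MeasurableEquiv.toLp 2 (Fin 2 → ℝ)).symm.trans
      (MeasurableEquiv.finTwoArrow)) :=
    (volume_preserving_finTwoArrow ℝ).comp
      (EuclideanSpace.volume_preserving_symm_measurableEquiv_toLp (Fin 2))
  rw [convexHull_stdTriangle, ← volume_stdTriangle_prod, ← hpres.measure_preimage_equiv]
  congr 1
  ext x
  change _ ↔ (0 ≤ x 0 ∧ x 0 ≤ 1) ∧ 0 ≤ x 1 ∧ x 1 ≤ 1 - x 0
  exact ⟨fun ⟨h0, h1, h⟩ => ⟨⟨h0, by linarith⟩, h1, by linarith⟩,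
    fun ⟨⟨h0, _⟩, h1, h⟩ => ⟨h0, h1, by linarith⟩⟩

theorem convexHull_triangle_eq_image (p q r : E) :
    convexHull ℝ {p, q, r} = (p + ·) '' (Matrix.toLpLin 2 2
      !![q 0 - p 0, r 0 - p 0; q 1 - p 1, r 1 - p 1] '' convexHull ℝ {0, !₂[1, 0], !₂[0, 1]}) := by
  set L := Matrix.toLpLin 2 2 !![q 0 - p 0, r 0 - p 0; q 1 - p 1, r 1 - p 1]
  have hq : L !₂[1, 0] = q - p := by
    ext i; fin_cases i <;> simp [L, Matrix.toLpLin_apply]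
  have hr : L !₂[0, 1] = r - p := by
    ext i; fin_cases i <;> simp [L, Matrix.toLpLin_apply]
  rw [← image_comp]
  refine Eq.trans ?_ (((AffineEquiv.constVAdd ℝ E p).toAffineMap.comp
    L.toAffineMap).image_convexHull _).symm
  congr 1
  simp [image_insert_eq, hq, hr]

theorem triArea_eq_abs_det_div_two (p q r : E) :
    triArea p q r = |(q 0 - p 0) * (r 1 - p 1) - (q 1 - p 1) * (r 0 - p 0)| / 2 := by
  rw [triArea, convexHull_triangle_eq_image, image_add_left, measure_preimage_add,
    Measure.addHaar_image_linearMap, LinearMap.det_toLpLin, Matrix.det_fin_two_of,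
    volume_convexHull_stdTriangle, ← ENNReal.ofReal_mul (abs_nonneg _),
    ENNReal.toReal_ofReal (by positivity)]
  ring_nf

theorem mem_convexHull_triangle (p q r : E) {a b : ℝ} (ha : 0 ≤ a) (hb : 0 ≤ b) (hab : a + b ≤ 1) :
    p + a • (q - p) + b • (r - p) ∈ convexHull ℝ {p, q, r} := by
  rw [convexHull_triangle_eq_image, convexHull_stdTriangle]
  refine ⟨_, ⟨!₂[a, b], ⟨ha, hb, hab⟩, rfl⟩, ?_⟩
  ext i
  fin_cases i <;> simp [Matrix.toLpLin_apply] <;> ring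

end Area

open Finset

section IncreasingTriples

variable {α : Type*} [LinearOrder α]

theorem card_triple_of_lt {a b c : α} (hab : a < b) (hbc : b < c) : #{a, b, c} = 3 :=
  card_eq_three.2 ⟨a, b, c, hab.ne, (hab.trans hbc).ne, hbc.ne, rfl⟩

variable (α) [Fintype α]

def increasingTriples : Finset (α × α × α) := {t | t.1 < t.2.1 ∧ t.2.1 < t.2.2}

variable {α}

theorem mem_increasingTriples {t : α × α × α} :
    t ∈ increasingTriples α ↔ t.1 < t.2.1 ∧ t.2.1 < t.2.2 := by
  simp [increasingTriples]

theorem card_increasingTriples : #(increasingTriples α) = (Fintype.card α).choose 3 := by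
  rw [← card_univ, ← card_powersetCard]
  refine card_bij' (fun t _ => {t.1, t.2.1, t.2.2})
    (fun s hs => let e := s.orderEmbOfFin (mem_powersetCard_univ.1 hs); (e 0, e 1, e 2))
    ?_ ?_ ?_ ?_
  · rintro ⟨a, b, c⟩ h
    obtain ⟨hab, hbc⟩ := mem_increasingTriples.1 h
    exact mem_powersetCard_univ.2 (card_triple_of_lt hab hbc)
  · intro s hs
    exact mem_increasingTriples.2 ⟨(orderEmbOfFin s _).strictMono (by decide),
      (orderEmbOfFin s _).strictMono (by decide)⟩
  · rintro ⟨a, b, c⟩ h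
    obtain ⟨hab, hbc⟩ := mem_increasingTriples.1 h
    have hmono : StrictMono ![a, b, c] := by
      refine Fin.strictMono_iff_lt_succ.2 fun i => ?_
      fin_cases i
      exacts [hab, hbc]
    have := orderEmbOfFin_unique (card_triple_of_lt hab hbc) (fun i => by fin_cases i <;> simp)
      hmono
    simp only [← this]
    rfl
  · intro s hs
    ext x
    rw [← mem_coe (s := s), ← range_orderEmbOfFin s (mem_powersetCard_univ.1 hs)]
    simp only [mem_insert, mem_singleton, Set.mem_range, Fin.exists_fin_succ, IsEmpty.exists_iff,
      or_false, eq_comm (a := x)]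
    rfl

end IncreasingTriples

theorem Monotone.filter_comp_mem_increasingTriples_subset {α β : Type*} [Fintype α]
    [LinearOrder α] [Fintype β] [LinearOrder β] {f : α → β} (hf : Monotone f) :
    ({t | (f t.1, f t.2.1, f t.2.2) ∈ increasingTriples β} : Finset (α × α × α)) ⊆
      increasingTriples α := by
  intro t ht
  simp only [mem_filter, mem_univ, true_and] at ht
  obtain ⟨h₁, h₂⟩ := mem_increasingTriples.1 ht
  exact mem_increasingTriples.2 ⟨hf.reflect_lt h₁, hf.reflect_lt h₂⟩

theorem card_mul_pow_three_le_card_filter {α β : Type*} [Fintype α] [DecidableEq β] (f : α → β)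
    (S : Finset (β × β × β)) {m : ℕ} (hf : ∀ b, m ≤ #{a | f a = b}) :
    #S * m ^ 3 ≤ #{t : α × α × α | (f t.1, f t.2.1, f t.2.2) ∈ S} := by
  let g (t : α × α × α) : β × β × β := (f t.1, f t.2.1, f t.2.2)
  rw [card_eq_sum_card_fiberwise (f := g) (t := S) fun t ht => by simpa using ht,
    card_eq_sum_ones, sum_mul, one_mul]
  refine sum_le_sum fun s hs => ?_
  calc m ^ 3 ≤ #(({a | f a = s.1} : Finset α) ×ˢ ({a | f a = s.2.1} : Finset α) ×ˢ
        ({a | f a = s.2.2} : Finset α)) := by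
        rw [card_product, card_product, pow_three]
        exact Nat.mul_le_mul (hf _) (Nat.mul_le_mul (hf _) (hf _))
    _ ≤ _ := card_le_card fun t ht => by
        simp only [mem_product, mem_filter, mem_univ, true_and] at ht ⊢
        obtain ⟨h₁, h₂, h₃⟩ := ht
        simp [g, h₁, h₂, h₃, hs]

def block (k m : ℕ) {n : ℕ} (i : Fin n) : Fin (k + 1) := ⟨min k (i / m), by omega⟩

theorem block_monotone (k m n : ℕ) : Monotone (block k m : Fin n → Fin (k + 1)) :=
  fun _ _ h => Fin.mk_le_mk.2 (min_le_min_left _ (Nat.div_le_div_right h))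

theorem le_card_block_eq {k m n : ℕ} (h : (k + 1) * m ≤ n) (j : Fin (k + 1)) :
    m ≤ #{i : Fin n | block k m i = j} := by
  have hlt (a : Fin m) : j * m + a < n := by
    nlinarith [a.isLt, j.isLt]
  calc m = #(univ : Finset (Fin m)) := by simp
    _ ≤ _ := card_le_card_of_injOn (fun a => ⟨j * m + a, hlt a⟩) (fun a _ => by
        have hm : 0 < m := a.pos
        simp only [coe_filter, mem_univ, true_and, Set.mem_ofPred_eq, block, Fin.ext_iff]
        rw [Nat.mul_comm, Nat.mul_add_div hm, Nat.div_eq_of_lt a.isLt]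
        omega)
      (fun a _ b _ hab => Fin.ext (by simpa using hab))

noncomputable def clusterCentre : Fin 4 → E := ![!₂[0, 0], !₂[2, 0], !₂[0, 1], !₂[2 / 3, 1 / 3]]

theorem triArea_clusterCentre_eq_one :
    triArea (clusterCentre 0) (clusterCentre 1) (clusterCentre 2) = 1 := by
  rw [triArea_eq_abs_det_div_two]
  norm_num [clusterCentre, Matrix.cons_val_two, Matrix.cons_val_three]

theorem quarter_lt_triArea_clusterCentre {t : Fin 4 × Fin 4 × Fin 4}
    (ht : t ∈ increasingTriples (Fin 4)) :
    1 / 4 < triArea (clusterCentre t.1) (clusterCentre t.2.1) (clusterCentre t.2.2) := by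
  have : t ∈ ({(0, 1, 2), (0, 1, 3), (0, 2, 3), (1, 2, 3)} : Finset _) := by
    revert t; decide
  simp only [mem_insert, mem_singleton] at this
  rcases this with rfl | rfl | rfl | rfl <;> rw [triArea_eq_abs_det_div_two] <;>
    norm_num [clusterCentre, Matrix.cons_val_two, Matrix.cons_val_three]

theorem clusterCentre_mem_convexHull (j : Fin 4) :
    clusterCentre j ∈ convexHull ℝ {clusterCentre 0, clusterCentre 1, clusterCentre 2} := by
  fin_cases j
  · exact subset_convexHull ℝ _ (by simp)
  · exact subset_convexHull ℝ _ (by simp)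
  · exact subset_convexHull ℝ _ (by simp)
  · convert mem_convexHull_triangle (clusterCentre 0) (clusterCentre 1) (clusterCentre 2)
      (a := 1 / 3) (b := 1 / 3) (by norm_num) (by norm_num) (by norm_num) using 1
    ext i
    fin_cases i <;> norm_num [clusterCentre, Matrix.cons_val_two, Matrix.cons_val_three]

theorem three_eighths_sub_mul_choose_three_le {ε : ℝ} (hε : 0 < ε) {n : ℕ} (hn : 27 / (8 * ε) ≤ n) :
    (3 / 8 - ε) * n.choose 3 ≤ 4 * ((n / 4 : ℕ) : ℝ) ^ 3 := by
  rcases le_or_gt (3 / 8) ε with hε' | hε'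
  · exact (mul_nonpos_of_nonpos_of_nonneg (by linarith) (Nat.cast_nonneg _)).trans (by positivity)
  have h27 : 27 ≤ 8 * ε * n := by rwa [div_le_iff₀ (by positivity), mul_comm] at hn
  have hn9 : (9 : ℝ) ≤ n := by nlinarith
  have hchoose : (n.choose 3 : ℝ) ≤ n ^ 3 / 6 := by
    simpa [Nat.factorial] using Nat.choose_le_pow_div (α := ℝ) 3 n
  have hm : ((n : ℝ) - 3) / 4 ≤ (n / 4 : ℕ) := by
    have : (n : ℝ) ≤ 4 * (n / 4 : ℕ) + 3 := by exact_mod_cast (by omega : n ≤ 4 * (n / 4) + 3)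
    linarith
  calc (3 / 8 - ε) * n.choose 3 ≤ (3 / 8 - ε) * (n ^ 3 / 6) := by gcongr
    _ ≤ 4 * (((n : ℝ) - 3) / 4) ^ 3 := by
      nlinarith [mul_nonneg (sub_nonneg.2 h27) (sq_nonneg (n : ℝ))]
    _ ≤ 4 * ((n / 4 : ℕ) : ℝ) ^ 3 := by gcongr; linarith

theorem ncard_triArea_clusterCentre_le_quarter_add_le (n : ℕ) :
    {t : Fin n × Fin n × Fin n | t.1 < t.2.1 ∧ t.2.1 < t.2.2 ∧
      triArea (clusterCentre (block 3 (n / 4) t.1)) (clusterCentre (block 3 (n / 4) t.2.1))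
        (clusterCentre (block 3 (n / 4) t.2.2)) ≤ 1 / 4}.ncard + 4 * (n / 4) ^ 3 ≤ n.choose 3 := by
  let cluster : Fin n → Fin 4 := block 3 (n / 4)
  set rainbow : Finset (Fin n × Fin n × Fin n) :=
    {t | (cluster t.1, cluster t.2.1, cluster t.2.2) ∈ increasingTriples (Fin 4)}
  have hrainbow : 4 * (n / 4) ^ 3 ≤ #rainbow := by
    simpa [card_increasingTriples] using card_mul_pow_three_le_card_filter cluster
      (increasingTriples (Fin 4)) (le_card_block_eq (by omega))
  have hsplit : #(increasingTriples (Fin n) \ rainbow) + #rainbow = n.choose 3 := by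
    rw [card_sdiff_add_card_eq_card
      (block_monotone 3 (n / 4) n).filter_comp_mem_increasingTriples_subset,
      card_increasingTriples, Fintype.card_fin]
  refine le_trans (Nat.add_le_add ?_ hrainbow) hsplit.le
  rw [← Set.ncard_coe_finset]
  refine Set.ncard_le_ncard (fun t ⟨h₁, h₂, harea⟩ => ?_) (finite_toSet _)
  simp only [coe_sdiff, Set.mem_sdiff, mem_coe, mem_increasingTriples]
  exact ⟨⟨h₁, h₂⟩, fun ht => (quarter_lt_triArea_clusterCentre (mem_filter.1 ht).2).not_ge harea⟩

theorem stmt_15 (ε : ℝ) (hε : 0 < ε) :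
    ∃ N : ℕ, ∀ n ≥ N,
      ∃ (A B C : EuclideanSpace ℝ (Fin 2)) (p : Fin n → EuclideanSpace ℝ (Fin 2)),
        triArea A B C = 1 ∧
        (∀ i, p i ∈ convexHull ℝ ({A, B, C} : Set (EuclideanSpace ℝ (Fin 2)))) ∧
        ({t : Fin n × Fin n × Fin n | t.1 < t.2.1 ∧ t.2.1 < t.2.2 ∧
            triArea (p t.1) (p t.2.1) (p t.2.2) ≤ 1 / 4}.ncard : ℝ) ≤
          (5 / 8 + ε) * (n.choose 3) := by
  refine ⟨⌈27 / (8 * ε)⌉₊, fun n hn => ?_⟩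
  refine ⟨clusterCentre 0, clusterCentre 1, clusterCentre 2,
    fun i => clusterCentre (block 3 (n / 4) i), triArea_clusterCentre_eq_one,
    fun i => clusterCentre_mem_convexHull _, ?_⟩
  have hcount := ncard_triArea_clusterCentre_le_quarter_add_le n
  rw [← Nat.cast_le (α := ℝ)] at hcount
  push_cast at hcount
  have hn' : 27 / (8 * ε) ≤ n := (Nat.le_ceil _).trans (by exact_mod_cast hn)
  linarith [three_eighths_sub_mul_choose_three_le hε hn']
end
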